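/- (Ω(T/|K|) comparison.) Let g₁, …, g_T : Ω → ℝ^d be random vectors on a probability space with E‖gᵢ‖² < ∞, let P⊥ be the orthogonal projection onto a subspace W of ℝ^d, and assume the projected noise components are pairwise uncorrelated: E⟨P⊥ gᵢ, P⊥ gⱼ⟩ = 0 for all i ≠ j. Let K ⊆ {1, …, T} be nonempty, and assume E‖P⊥ gᵢ‖² ≥ ν² for every i ∉ K, 0 < E‖P⊥ gᵢ‖² ≤ σ̄² for every i ∈ K, and ν² ≥ σ̄². Then E‖P⊥ ∑_{i=1}^T gᵢ‖² / E‖P⊥ ∑_{i ∈ K} gᵢ‖² ≥ T / |K|, so the expected-noise ratio between sequence-level and token-level unlearning is at least T/|K|. -/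

import Mathlib

open MeasureTheory Finset
open scoped RealInnerProductSpace BigOperators

/-- The orthogonal projection onto a subspace `W` of `ℝ^d`, viewed as a map `ℝ^d → ℝ^d`. -/
noncomputable def Pproj {d : ℕ} (W : Submodule ℝ (EuclideanSpace ℝ (Fin d))) :
    EuclideanSpace ℝ (Fin d) →L[ℝ] EuclideanSpace ℝ (Fin d) :=
  W.subtypeL.comp (W.orthogonalProjectionOnto)

/-!
Expanding the square, uncorrelatedness kills the cross terms, so the expected projected noise of a
sum of tokens is the sum of the per-token expected noises. The noise per critical token is at most
`σ̄²`, that of any other token at least `ν² ≥ σ̄²`; hence the average over all `T` tokens is at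
least the average over `K`, which is the claimed ratio `T / |K|`.
-/

section Pythagoras

variable {Ω E ι : Type*} [MeasurableSpace Ω] {μ : Measure Ω}
  [NormedAddCommGroup E] [InnerProductSpace ℝ E]

theorem MeasureTheory.MemLp.integrable_inner {f g : Ω → E} (hf : MemLp f 2 μ)
    (hg : MemLp g 2 μ) : Integrable (fun x => ⟪f x, g x⟫) μ :=
  (L2.integrable_inner (𝕜 := ℝ) (hf.toLp f) (hg.toLp g)).congr <| by
    filter_upwards [hf.coeFn_toLp, hg.coeFn_toLp] with x hfx hgx
    rw [hfx, hgx]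

theorem integral_norm_sum_sq_of_integral_inner_eq_zero {f : ι → Ω → E}
    (hf : ∀ i, MemLp (f i) 2 μ)
    (horth : ∀ i j, i ≠ j → ∫ x, ⟪f i x, f j x⟫ ∂μ = 0) (s : Finset ι) :
    ∫ x, ‖∑ i ∈ s, f i x‖ ^ 2 ∂μ = ∑ i ∈ s, ∫ x, ‖f i x‖ ^ 2 ∂μ := by
  have hint i j : Integrable (fun x => ⟪f i x, f j x⟫) μ := (hf i).integrable_inner (hf j)
  have hexpand x : ‖∑ i ∈ s, f i x‖ ^ 2 = ∑ i ∈ s, ∑ j ∈ s, ⟪f i x, f j x⟫ := by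
    simp_rw [← real_inner_self_eq_norm_sq, sum_inner, inner_sum]
  simp_rw [hexpand]
  rw [integral_finsetSum _ fun i _ => integrable_finsetSum _ fun j _ => hint i j]
  refine sum_congr rfl fun i hi => ?_
  rw [integral_finsetSum _ fun j _ => hint i j,
    sum_eq_single_of_mem i hi fun j _ hji => horth i j hji.symm]
  simp_rw [real_inner_self_eq_norm_sq]

end Pythagoras

theorem card_div_card_le_sum_div_sum_of_le_of_le {ι : Type*} [Fintype ι] [DecidableEq ι]
    {a : ι → ℝ} {K : Finset ι} {c : ℝ} (hK : ∀ i ∈ K, a i ≤ c)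
    (hKc : ∀ i ∉ K, c ≤ a i)
    (hpos : 0 < ∑ i ∈ K, a i) :
    (Fintype.card ι : ℝ) / #K ≤ (∑ i, a i) / ∑ i ∈ K, a i := by
  have hcard : (0 : ℝ) < #K := by
    obtain ⟨i, hi⟩ := nonempty_of_sum_ne_zero hpos.ne'
    exact_mod_cast card_pos.mpr ⟨i, hi⟩
  have hsumK : ∑ i ∈ K, a i ≤ #K * c := by
    simpa using sum_le_sum hK
  have hsumKc : #Kᶜ * c ≤ ∑ i ∈ Kᶜ, a i := by
    simpa using sum_le_sum fun i hi => hKc i (mem_compl.mp hi)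
  have hcardι : (Fintype.card ι : ℝ) = #K + #Kᶜ := by
    exact_mod_cast (card_add_card_compl K).symm
  rw [div_le_div_iff₀ hcard hpos, ← sum_add_sum_compl K, hcardι]
  nlinarith [mul_le_mul_of_nonneg_left hsumK (Nat.cast_nonneg (α := ℝ) #Kᶜ),
    mul_le_mul_of_nonneg_left hsumKc hcard.le]

theorem stmt13_general {Ω : Type*} [MeasurableSpace Ω] (μ : Measure Ω)
    {d T : ℕ} (g : Fin T → Ω → EuclideanSpace ℝ (Fin d))
    (hmeas : ∀ i, Measurable (g i))
    (hL2 : ∀ i, Integrable (fun x => ‖g i x‖ ^ 2) μ)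
    (W : Submodule ℝ (EuclideanSpace ℝ (Fin d)))
    (huncorr : ∀ i j, i ≠ j → ∫ x, ⟪Pproj W (g i x), Pproj W (g j x)⟫ ∂μ = 0)
    (K : Finset (Fin T)) (hK : K.Nonempty)
    (ν : ℝ) (hν : ∀ i ∉ K, ν ^ 2 ≤ ∫ x, ‖Pproj W (g i x)‖ ^ 2 ∂μ)
    (σb : ℝ)
    (hσb : ∀ i ∈ K, (0 < ∫ x, ‖Pproj W (g i x)‖ ^ 2 ∂μ)
      ∧ (∫ x, ‖Pproj W (g i x)‖ ^ 2 ∂μ) ≤ σb ^ 2)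
    (hνσ : σb ^ 2 ≤ ν ^ 2) :
    (T : ℝ) / K.card
      ≤ (∫ x, ‖Pproj W (∑ i, g i x)‖ ^ 2 ∂μ)
          / ∫ x, ‖Pproj W (∑ i ∈ K, g i x)‖ ^ 2 ∂μ := by
  have hproj : ∀ i, MemLp (fun x => Pproj W (g i x)) 2 μ := fun i =>
    (Pproj W).comp_memLp'
      ((memLp_two_iff_integrable_sq_norm (hmeas i).aestronglyMeasurable).mpr (hL2 i))
  simp only [map_sum]
  rw [integral_norm_sum_sq_of_integral_inner_eq_zero hproj huncorr,
    integral_norm_sum_sq_of_integral_inner_eq_zero hproj huncorr]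
  simpa only [Fintype.card_fin] using
    card_div_card_le_sum_div_sum_of_le_of_le (fun i hi => (hσb i hi).2)
    (fun i hi => hνσ.trans (hν i hi)) (sum_pos (fun i hi => (hσb i hi).1) hK)

/-- Ω(T/|K|) comparison: with pairwise uncorrelated projected noise, noise at
least `ν²` on non-critical tokens, noise in `(0, σ̄²]` on critical tokens, and `ν² ≥ σ̄²`,
the expected-noise ratio between sequence-level and token-level unlearning is at least
`T / |K|`. -/
theorem stmt13 {Ω : Type*} [MeasurableSpace Ω] (μ : Measure Ω) [IsProbabilityMeasure μ]
    {d T : ℕ} (g : Fin T → Ω → EuclideanSpace ℝ (Fin d))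
    (hmeas : ∀ i, Measurable (g i))
    (hL2 : ∀ i, Integrable (fun x => ‖g i x‖ ^ 2) μ)
    (W : Submodule ℝ (EuclideanSpace ℝ (Fin d)))
    (huncorr : ∀ i j, i ≠ j → ∫ x, ⟪Pproj W (g i x), Pproj W (g j x)⟫ ∂μ = 0)
    (K : Finset (Fin T)) (hK : K.Nonempty)
    (ν : ℝ) (hν : ∀ i ∉ K, ν ^ 2 ≤ ∫ x, ‖Pproj W (g i x)‖ ^ 2 ∂μ)
    (σb : ℝ)
    (hσb : ∀ i ∈ K, (0 < ∫ x, ‖Pproj W (g i x)‖ ^ 2 ∂μ)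
      ∧ (∫ x, ‖Pproj W (g i x)‖ ^ 2 ∂μ) ≤ σb ^ 2)
    (hνσ : σb ^ 2 ≤ ν ^ 2) :
    (T : ℝ) / K.card
      ≤ (∫ x, ‖Pproj W (∑ i, g i x)‖ ^ 2 ∂μ)
          / ∫ x, ‖Pproj W (∑ i ∈ K, g i x)‖ ^ 2 ∂μ :=
  stmt13_general μ g hmeas hL2 W huncorr K hK ν hν σb hσb hνσ
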